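/- arXiv:math/0612365 — 5 statements merged into one kernel-verified Lean document; each statement's English description precedes it below -/
import Mathlib

section
/- For every n ≥ 1, all indices 1 ≤ i ≤ m ≤ n and 1 ≤ i′ ≤ m′ ≤ n, all z, w ∈ ℂ, and every B ∈ Matₙ(ℂ): φ_{m,i}(z)(φ_{m′,i′}(w)(B)) = φ_{m′,i′}(w)(φ_{m,i}(z)(B)). That is, the Gelfand–Zeitlin flows on Matₙ(ℂ) pairwise commute, so that composing them defines an action of the abelian group ℂ^{n(n+1)/2} on Matₙ(ℂ). -/
open Matrix

noncomputable section

/-- Upper-left `m × m` submatrix of an `n × n` matrix. -/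
def ulMinor {n : ℕ} (m : ℕ) (hm : m ≤ n) (B : Matrix (Fin n) (Fin n) ℂ) :
    Matrix (Fin m) (Fin m) ℂ :=
  fun i j => B (Fin.castLE hm i) (Fin.castLE hm j)

/-- The embedding `ι_m` of `m × m` matrices into `n × n` matrices, placing the matrix in
the upper-left block and zeros elsewhere. -/
def iotaEmb {m : ℕ} (n : ℕ) (X : Matrix (Fin m) (Fin m) ℂ) : Matrix (Fin n) (Fin n) ℂ :=
  fun i j => if hi : (i : ℕ) < m then
    (if hj : (j : ℕ) < m then X ⟨i, hi⟩ ⟨j, hj⟩ else 0) else 0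

/-- The Gelfand–Zeitlin flow `φ_{m,i}(z)(B) = exp(z ι_m((B_(m))^(i-1))) B exp(-z ι_m((B_(m))^(i-1)))`. -/
def gzFlow {n : ℕ} (m i : ℕ) (hm : m ≤ n) (z : ℂ) (B : Matrix (Fin n) (Fin n) ℂ) :
    Matrix (Fin n) (Fin n) ℂ :=
  NormedSpace.exp (z • iotaEmb n ((ulMinor m hm B) ^ (i - 1))) * B *
    NormedSpace.exp ((-z) • iotaEmb n ((ulMinor m hm B) ^ (i - 1)))

/-!
Let `P` be the `m × n` matrix of the inclusion of the first `m` coordinates, so that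
`B_(m) = P B Pᵀ`, `ι_m X = Pᵀ X P` and `P Pᵀ = 1`. Then `exp (ι_m X) = diag(exp X, 1)`, and
conjugating `B` by `diag(u, 1)` conjugates `B_(m)` by `u`. Consequently `φ_{m,i}(z)` is
conjugation by `diag(u, 1)` with `u = exp(z (B_(m))^(i-1))` commuting with `B_(m)`: the flow fixes
`B_(m)`, and it is equivariant under conjugation by every `diag(u, 1)`.

For `m ≤ m'` the conjugator `g` of `φ_{m,i}(z)` has the form `diag(u, 1)` with `u` of size `m'`
and depends only on `B_(m)`, which `φ_{m',i'}(w)` does not change; so both composites equal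
`g φ_{m',i'}(w)(B) g⁻¹`.
-/

namespace Matrix

open NormedSpace

variable {ι κ : Type*} [Fintype ι] [Fintype κ] [DecidableEq ι] [DecidableEq κ]

section Corner

variable {α : Type*} [Ring α] {P : Matrix κ ι α} {R : Matrix ι κ α}

/-- When `P` selects a block of coordinates and `R = Pᵀ`, this is `A ↦ diag(A, 1)`. -/
def cornerHom (h : P * R = 1) : Matrix κ κ α →* Matrix ι ι α where
  toFun A := 1 - R * P + R * A * P
  map_one' := by rw [Matrix.mul_one, sub_add_cancel]
  map_mul' A A' := by
    have hP : P * (1 - R * P + R * A' * P) = A' * P := by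
      simp only [Matrix.mul_add, Matrix.mul_sub, Matrix.mul_one, ← Matrix.mul_assoc, h,
        Matrix.one_mul, sub_self, zero_add]
    rw [Matrix.add_mul, Matrix.sub_mul, Matrix.one_mul, Matrix.mul_assoc R P,
      Matrix.mul_assoc (R * A) P, hP]
    simp only [Matrix.mul_assoc]
    abel

lemma mul_cornerHom (h : P * R = 1) (A : Matrix κ κ α) : P * cornerHom h A = A * P := by
  simp only [cornerHom, MonoidHom.coe_mk, OneHom.coe_mk, Matrix.mul_add, Matrix.mul_sub,
    Matrix.mul_one, ← Matrix.mul_assoc, h, Matrix.one_mul, sub_self, zero_add]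

lemma cornerHom_mul (h : P * R = 1) (A : Matrix κ κ α) : cornerHom h A * R = R * A := by
  simp only [cornerHom, MonoidHom.coe_mk, OneHom.coe_mk, Matrix.add_mul, Matrix.sub_mul,
    Matrix.one_mul, Matrix.mul_assoc, h, Matrix.mul_one, sub_self, zero_add]

lemma mul_mul_pow_succ_of_mul_eq_one (h : P * R = 1) (X : Matrix κ κ α) (k : ℕ) :
    (R * X * P) ^ (k + 1) = R * X ^ (k + 1) * P := by
  induction k with
  | zero => simp
  | succ k ih =>
    rw [pow_succ, ih, pow_succ X (k + 1)]
    simp only [Matrix.mul_assoc]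
    rw [← Matrix.mul_assoc P R, h, Matrix.one_mul]

end Corner

variable {𝕂 : Type*} [RCLike 𝕂]

lemma hasSum_exp_series (X : Matrix ι ι 𝕂) :
    HasSum (fun k => (k.factorial⁻¹ : 𝕂) • X ^ k) (exp X) := by
  open scoped Norms.Operator in exact exp_series_hasSum_exp' X

lemma exp_mul_mul_eq_cornerHom {P : Matrix κ ι 𝕂} {R : Matrix ι κ 𝕂} (h : P * R = 1)
    (X : Matrix κ κ 𝕂) : exp (R * X * P) = cornerHom h (exp X) := by
  let conj : Matrix κ κ 𝕂 →+ Matrix ι ι 𝕂 :=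
    AddMonoidHom.mk' (fun Y => R * Y * P) fun _ _ => by rw [Matrix.mul_add, Matrix.add_mul]
  have hconj : HasSum (fun k => (k.factorial⁻¹ : 𝕂) • (R * X ^ k * P)) (R * exp X * P) := by
    simpa [conj, Function.comp_def, Matrix.mul_smul, Matrix.smul_mul] using
      (hasSum_exp_series X).map conj
        ((continuous_const.matrix_mul continuous_id).matrix_mul continuous_const)
  have hterms : (fun k => (k.factorial⁻¹ : 𝕂) • (R * X * P) ^ k) =
      fun k => (k.factorial⁻¹ : 𝕂) • (R * X ^ k * P) + if k = 0 then 1 - R * P else 0 := by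
    funext k
    cases k with
    | zero => simp
    | succ k => simp [mul_mul_pow_succ_of_mul_eq_one h]
  have hsum := hconj.add (hasSum_ite_eq 0 (1 - R * P))
  rw [← hterms] at hsum
  rw [(hasSum_exp_series (R * X * P)).unique hsum]
  simp only [cornerHom, MonoidHom.coe_mk, OneHom.coe_mk]
  abel

def expUnit (A : Matrix ι ι 𝕂) : (Matrix ι ι 𝕂)ˣ where
  val := exp A
  inv := exp (-A)
  val_inv := by
    rw [← exp_add_of_commute _ _ (Commute.refl A).neg_right, add_neg_cancel, exp_zero]
  inv_val := by
    rw [← exp_add_of_commute _ _ (Commute.refl A).neg_left, neg_add_cancel, exp_zero]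

lemma val_expUnit (A : Matrix ι ι 𝕂) : (expUnit A : Matrix ι ι 𝕂) = exp A :=
  rfl

lemma expUnit_conj (U : (Matrix ι ι 𝕂)ˣ) (A : Matrix ι ι 𝕂) :
    expUnit (U * A * U⁻¹ : Matrix ι ι 𝕂) = U * expUnit A * U⁻¹ :=
  Units.ext (exp_units_conj U A)

end Matrix

section GelfandZeitlin

open NormedSpace

variable {m m' n : ℕ}

def ulProj (n : ℕ) (hm : m ≤ n) : Matrix (Fin m) (Fin n) ℂ :=
  (1 : Matrix (Fin n) (Fin n) ℂ).submatrix (Fin.castLE hm) id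

lemma ulProj_mul {p : Type*} [Fintype p] (hm : m ≤ n) (C : Matrix (Fin n) p ℂ) :
    ulProj n hm * C = C.submatrix (Fin.castLE hm) id := by
  ext
  simp [ulProj, mul_apply, one_apply]

lemma mul_ulProj_transpose {p : Type*} [Fintype p] (hm : m ≤ n) (C : Matrix p (Fin n) ℂ) :
    C * (ulProj n hm)ᵀ = C.submatrix id (Fin.castLE hm) := by
  ext
  simp [ulProj, mul_apply, one_apply]

lemma ulProj_mul_transpose (hm : m ≤ n) : ulProj n hm * (ulProj n hm)ᵀ = 1 := by
  rw [ulProj_mul]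
  ext
  simp [ulProj, one_apply]

lemma ulProj_mul_ulProj (hmm' : m ≤ m') (hm' : m' ≤ n) :
    ulProj m' hmm' * ulProj n hm' = ulProj n (hmm'.trans hm') := by
  rw [ulProj_mul]
  rfl

lemma ulMinor_eq_mul (hm : m ≤ n) (B : Matrix (Fin n) (Fin n) ℂ) :
    ulMinor m hm B = ulProj n hm * B * (ulProj n hm)ᵀ := by
  rw [ulProj_mul, mul_ulProj_transpose]
  rfl

lemma transpose_ulProj_mul {p : Type*} (hm : m ≤ n) (C : Matrix (Fin m) p ℂ) (i : Fin n)
    (l : p) :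
    ((ulProj n hm)ᵀ * C) i l = if h : (i : ℕ) < m then C ⟨i, h⟩ l else 0 := by
  simp only [mul_apply, transpose_apply, ulProj, submatrix_apply, id, one_apply]
  split_ifs with h
  · rw [Finset.sum_eq_single ⟨i, h⟩] <;> simp +contextual [Fin.ext_iff]
  · refine Finset.sum_eq_zero fun k _ => ?_
    simp [Fin.ext_iff, show (k : ℕ) ≠ i from fun e => h (e ▸ k.isLt)]

lemma iotaEmb_eq_mul (hm : m ≤ n) (X : Matrix (Fin m) (Fin m) ℂ) :
    iotaEmb n X = (ulProj n hm)ᵀ * X * ulProj n hm := by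
  rw [← transpose_transpose ((ulProj n hm)ᵀ * X * ulProj n hm), transpose_mul]
  ext i j
  simp only [transpose_apply, transpose_ulProj_mul, iotaEmb]
  split_ifs <;> rfl

lemma ulMinor_ulMinor (hmm' : m ≤ m') (hm' : m' ≤ n) (B : Matrix (Fin n) (Fin n) ℂ) :
    ulMinor m hmm' (ulMinor m' hm' B) = ulMinor m (hmm'.trans hm') B :=
  rfl

lemma smul_iotaEmb (z : ℂ) (X : Matrix (Fin m) (Fin m) ℂ) :
    z • iotaEmb n X = iotaEmb n (z • X) := by
  ext i j
  simp only [iotaEmb, Matrix.smul_apply]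
  split_ifs <;> simp

lemma iotaEmb_iotaEmb (hmm' : m ≤ m') (hm' : m' ≤ n) (X : Matrix (Fin m) (Fin m) ℂ) :
    iotaEmb n (iotaEmb m' X) = iotaEmb n X := by
  rw [iotaEmb_eq_mul hm', iotaEmb_eq_mul hmm', iotaEmb_eq_mul (hmm'.trans hm'),
    ← ulProj_mul_ulProj hmm' hm', transpose_mul]
  simp only [Matrix.mul_assoc]

abbrev ulCorner (hm : m ≤ n) : Matrix (Fin m) (Fin m) ℂ →* Matrix (Fin n) (Fin n) ℂ :=
  cornerHom (ulProj_mul_transpose hm)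

lemma exp_iotaEmb (hm : m ≤ n) (X : Matrix (Fin m) (Fin m) ℂ) :
    exp (iotaEmb n X) = ulCorner hm (exp X) := by
  rw [iotaEmb_eq_mul hm, exp_mul_mul_eq_cornerHom]

lemma ulMinor_ulCorner_mul_mul (hm : m ≤ n) (A A' : Matrix (Fin m) (Fin m) ℂ)
    (C : Matrix (Fin n) (Fin n) ℂ) :
    ulMinor m hm (ulCorner hm A * C * ulCorner hm A') = A * ulMinor m hm C * A' := by
  simp only [ulMinor_eq_mul, Matrix.mul_assoc]
  rw [cornerHom_mul, ← Matrix.mul_assoc (ulProj n hm), mul_cornerHom]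
  simp only [Matrix.mul_assoc]

lemma ulCorner_mul_iotaEmb_mul (hm : m ≤ n) (A A' Y : Matrix (Fin m) (Fin m) ℂ) :
    ulCorner hm A * iotaEmb n Y * ulCorner hm A' = iotaEmb n (A * Y * A') := by
  simp only [iotaEmb_eq_mul hm, Matrix.mul_assoc]
  rw [mul_cornerHom, ← Matrix.mul_assoc (ulCorner hm A), cornerHom_mul]
  simp only [Matrix.mul_assoc]

def gzUnit (m i : ℕ) (hm : m ≤ n) (z : ℂ) (B : Matrix (Fin n) (Fin n) ℂ) :
    (Matrix (Fin n) (Fin n) ℂ)ˣ :=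
  expUnit (z • iotaEmb n (ulMinor m hm B ^ (i - 1)))

lemma gzFlow_eq_conj (m i : ℕ) (hm : m ≤ n) (z : ℂ) (B : Matrix (Fin n) (Fin n) ℂ) :
    gzFlow m i hm z B = gzUnit m i hm z B * B * (gzUnit m i hm z B)⁻¹ := by
  rw [gzFlow, neg_smul]
  rfl

lemma ulMinor_gzFlow (hm : m ≤ n) (i : ℕ) (z : ℂ) (B : Matrix (Fin n) (Fin n) ℂ) :
    ulMinor m hm (gzFlow m i hm z B) = ulMinor m hm B := by
  set Y := ulMinor m hm B ^ (i - 1)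
  have hcomm : Commute (exp (z • Y)) (ulMinor m hm B) :=
    (((Commute.refl _).pow_left _).smul_left z).exp_left
  have hinv : exp (z • Y) * exp ((-z) • Y) = 1 := by
    rw [neg_smul]
    exact (expUnit _).mul_inv
  rw [gzFlow, smul_iotaEmb, smul_iotaEmb, exp_iotaEmb hm, exp_iotaEmb hm,
    ulMinor_ulCorner_mul_mul, hcomm.eq, Matrix.mul_assoc, hinv, Matrix.mul_one]

lemma gzUnit_of_le (hmm' : m ≤ m') (hm' : m' ≤ n) (i : ℕ) (z : ℂ)
    (B : Matrix (Fin n) (Fin n) ℂ) :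
    gzUnit m i (hmm'.trans hm') z B =
      Units.map (ulCorner hm')
        (expUnit (z • iotaEmb m' (ulMinor m hmm' (ulMinor m' hm' B) ^ (i - 1)))) := by
  ext1
  rw [gzUnit, Units.coe_map, val_expUnit, val_expUnit, ulMinor_ulMinor]
  simp only [smul_iotaEmb]
  rw [← exp_iotaEmb hm', iotaEmb_iotaEmb hmm' hm']

lemma gzFlow_conj_ulCorner (hm : m ≤ n) (u : (Matrix (Fin m) (Fin m) ℂ)ˣ) (i : ℕ) (z : ℂ)
    (B : Matrix (Fin n) (Fin n) ℂ) :
    gzFlow m i hm z (Units.map (ulCorner hm) u * B * (Units.map (ulCorner hm) u)⁻¹) =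
      Units.map (ulCorner hm) u * gzFlow m i hm z B * (Units.map (ulCorner hm) u)⁻¹ := by
  set U := Units.map (ulCorner hm) u
  have hminor :
      ulMinor m hm (U * B * U⁻¹) = (u * ulMinor m hm B * u⁻¹ : Matrix (Fin m) (Fin m) ℂ) :=
    ulMinor_ulCorner_mul_mul hm _ _ B
  have hgen :
      z • iotaEmb n ((u * ulMinor m hm B * u⁻¹ : Matrix (Fin m) (Fin m) ℂ) ^ (i - 1)) =
        U * (z • iotaEmb n (ulMinor m hm B ^ (i - 1))) * U⁻¹ := by
    rw [Units.conj_pow, ← ulCorner_mul_iotaEmb_mul, Matrix.mul_smul, Matrix.smul_mul]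
    rfl
  rw [gzFlow_eq_conj, gzFlow_eq_conj, gzUnit, gzUnit, hminor, hgen, expUnit_conj]
  simp only [_root_.mul_inv_rev, inv_inv, Units.val_mul, mul_assoc, Units.inv_mul_cancel_left]

theorem gzFlow_comm_of_le (hmm' : m ≤ m') (hm' : m' ≤ n) (i i' : ℕ) (z w : ℂ)
    (B : Matrix (Fin n) (Fin n) ℂ) :
    gzFlow m i (hmm'.trans hm') z (gzFlow m' i' hm' w B) =
      gzFlow m' i' hm' w (gzFlow m i (hmm'.trans hm') z B) := by
  have hU : gzUnit m i (hmm'.trans hm') z (gzFlow m' i' hm' w B) =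
      gzUnit m i (hmm'.trans hm') z B := by
    rw [gzUnit_of_le hmm' hm', gzUnit_of_le hmm' hm', ulMinor_gzFlow]
  rw [gzFlow_eq_conj m i, gzFlow_eq_conj m i, hU, gzUnit_of_le hmm' hm', gzFlow_conj_ulCorner]

end GelfandZeitlin

theorem gz_flows_commute_general (n : ℕ)
    (m i m' i' : ℕ) (hm : m ≤ n)
    (hm' : m' ≤ n)
    (z w : ℂ) (B : Matrix (Fin n) (Fin n) ℂ) :
    gzFlow m i hm z (gzFlow m' i' hm' w B) = gzFlow m' i' hm' w (gzFlow m i hm z B) := by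
  rcases le_total m m' with h | h
  · exact gzFlow_comm_of_le h hm' i i' z w B
  · exact (gzFlow_comm_of_le h hm i' i w z B).symm

/-- The Gelfand–Zeitlin flows on `Matₙ(ℂ)` pairwise commute. -/
theorem gz_flows_commute (n : ℕ) (hn : 1 ≤ n)
    (m i m' i' : ℕ) (hi1 : 1 ≤ i) (him : i ≤ m) (hm : m ≤ n)
    (hi1' : 1 ≤ i') (him' : i' ≤ m') (hm' : m' ≤ n)
    (z w : ℂ) (B : Matrix (Fin n) (Fin n) ℂ) :
    gzFlow m i hm z (gzFlow m' i' hm' w B) = gzFlow m' i' hm' w (gzFlow m i hm z B) :=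
  gz_flows_commute_general n m i m' i' hm hm' z w B
end
end

section
/- For every n ≥ 1, every B ∈ Matₙ(ℂ), and all indices 1 ≤ i ≤ m ≤ n and 1 ≤ i′ ≤ m′ ≤ n: tr( B · ( ι_m((B_{(m)})^{i−1})·ι_{m′}((B_{(m′)})^{i′−1}) − ι_{m′}((B_{(m′)})^{i′−1})·ι_m((B_{(m)})^{i−1}) ) ) = 0. (This expresses the vanishing of the Lie–Poisson bracket on gl(n,ℂ)* of the Gelfand–Zeitlin functions p_{m,i}(B) = tr((B_{(m)})^i) and p_{m′,i′}(B) = tr((B_{(m′)})^{i′}), since the differential of p_{m,i} at B is i·ι_m((B_{(m)})^{i−1}) and the Lie–Poisson bracket is {f,g}(B) = tr(B·[df(B), dg(B)]).) -/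
/-!
For `m ≤ m'`, cutting everything down to the upper-left `m' × m'` block turns the bracket into
`tr(B_(m') · [ι X, Y])` with `Y = (B_(m'))^k`, where `ι X` is the `m × m` matrix placed in the
`m' × m'` block. By cyclicity this is `tr([Y, B_(m')] · ι X)`, which vanishes because `Y` is a
power of `B_(m')`. The case `m' ≤ m` follows by antisymmetry of the bracket.
-/

open Matrix

noncomputable section

lemma Fin.sum_eq_sum_castLE {M : Type*} [AddCommMonoid M] {m n : ℕ} (hm : m ≤ n)
    (g : Fin n → M) (hg : ∀ j : Fin n, m ≤ (j : ℕ) → g j = 0) :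
    ∑ j, g j = ∑ j : Fin m, g (Fin.castLE hm j) := by
  refine (Fintype.sum_of_injective _ (Fin.castLE_injective hm) _ _ (fun j hj => hg j ?_)
    fun _ => rfl).symm
  by_contra! hjm
  exact hj ⟨⟨j, hjm⟩, rfl⟩

lemma trace_eq_trace_ulMinor {m n : ℕ} (hm : m ≤ n) (A : Matrix (Fin n) (Fin n) ℂ)
    (hA : ∀ j : Fin n, m ≤ (j : ℕ) → A j j = 0) :
    A.trace = (ulMinor m hm A).trace :=
  Fin.sum_eq_sum_castLE hm _ hA

lemma ulMinor_mul {m n : ℕ} (hm : m ≤ n) (A C : Matrix (Fin n) (Fin n) ℂ)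
    (hAC : ∀ j k l : Fin n, m ≤ (l : ℕ) → A j l * C l k = 0) :
    ulMinor m hm (A * C) = ulMinor m hm A * ulMinor m hm C := by
  ext j k
  exact Fin.sum_eq_sum_castLE hm _ fun l hl => hAC _ _ l hl

lemma iotaEmb_apply_of_le_left {m n : ℕ} (X : Matrix (Fin m) (Fin m) ℂ) {a : Fin n}
    (ha : m ≤ (a : ℕ)) (b : Fin n) : iotaEmb n X a b = 0 :=
  dif_neg (by omega)

lemma iotaEmb_apply_of_le_right {m n : ℕ} (X : Matrix (Fin m) (Fin m) ℂ) (a : Fin n) {b : Fin n}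
    (hb : m ≤ (b : ℕ)) : iotaEmb n X a b = 0 := by
  unfold iotaEmb
  split_ifs <;> first | omega | rfl

lemma iotaEmb_self {m : ℕ} (X : Matrix (Fin m) (Fin m) ℂ) : iotaEmb m X = X := by
  ext a b
  simp [iotaEmb]

lemma ulMinor_mul_iotaEmb {m m' n : ℕ} (hmm' : m ≤ m') (hm' : m' ≤ n)
    (A : Matrix (Fin n) (Fin n) ℂ) (X : Matrix (Fin m) (Fin m) ℂ) :
    ulMinor m' hm' (A * iotaEmb n X) = ulMinor m' hm' A * iotaEmb m' X :=
  ulMinor_mul hm' _ _ fun _ _ _ hl => by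
    rw [iotaEmb_apply_of_le_left X (hmm'.trans hl), mul_zero]

lemma ulMinor_iotaEmb_mul {m m' n : ℕ} (hmm' : m ≤ m') (hm' : m' ≤ n)
    (A : Matrix (Fin n) (Fin n) ℂ) (X : Matrix (Fin m) (Fin m) ℂ) :
    ulMinor m' hm' (iotaEmb n X * A) = iotaEmb m' X * ulMinor m' hm' A :=
  ulMinor_mul hm' _ _ fun _ _ _ hl => by
    rw [iotaEmb_apply_of_le_right X _ (hmm'.trans hl), zero_mul]

lemma trace_mul_iotaEmb {m n : ℕ} (hm : m ≤ n) (A : Matrix (Fin n) (Fin n) ℂ)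
    (Y : Matrix (Fin m) (Fin m) ℂ) :
    (A * iotaEmb n Y).trace = (ulMinor m hm A * Y).trace := by
  rw [trace_eq_trace_ulMinor hm, ulMinor_mul_iotaEmb le_rfl, iotaEmb_self]
  intro j hj
  rw [mul_apply]
  exact Finset.sum_eq_zero fun l _ => by rw [iotaEmb_apply_of_le_right Y l hj, mul_zero]

lemma trace_mul_iotaEmb_commutator_eq_zero {m m' n : ℕ} (hmm' : m ≤ m') (hm' : m' ≤ n)
    (B : Matrix (Fin n) (Fin n) ℂ) (X : Matrix (Fin m) (Fin m) ℂ)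
    (Y : Matrix (Fin m') (Fin m') ℂ) (hY : Commute Y (ulMinor m' hm' B)) :
    (B * (iotaEmb n X * iotaEmb n Y - iotaEmb n Y * iotaEmb n X)).trace = 0 := by
  set B' := ulMinor m' hm' B
  set X' := iotaEmb m' X
  have hXY : (B * (iotaEmb n X * iotaEmb n Y)).trace = (B' * X' * Y).trace := by
    rw [← Matrix.mul_assoc, trace_mul_iotaEmb hm', ulMinor_mul_iotaEmb hmm']
  have hYX : (B * (iotaEmb n Y * iotaEmb n X)).trace = (X' * B' * Y).trace := by
    rw [← Matrix.mul_assoc, trace_mul_comm, ← Matrix.mul_assoc, trace_mul_iotaEmb hm',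
      ulMinor_iotaEmb_mul hmm']
  calc (B * (iotaEmb n X * iotaEmb n Y - iotaEmb n Y * iotaEmb n X)).trace
      = (B' * X' * Y).trace - (X' * B' * Y).trace := by
        rw [Matrix.mul_sub, trace_sub, hXY, hYX]
    _ = (X' * (Y * B')).trace - (X' * (B' * Y)).trace := by
        rw [Matrix.mul_assoc, trace_mul_comm B', Matrix.mul_assoc, Matrix.mul_assoc]
    _ = 0 := by rw [hY.eq, sub_self]

theorem gz_hamiltonians_poisson_commute_general (n : ℕ)
    (B : Matrix (Fin n) (Fin n) ℂ)
    (m i m' i' : ℕ) (hm : m ≤ n)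
    (hm' : m' ≤ n) :
    Matrix.trace (B *
      (iotaEmb n ((ulMinor m hm B) ^ (i - 1)) * iotaEmb n ((ulMinor m' hm' B) ^ (i' - 1)) -
       iotaEmb n ((ulMinor m' hm' B) ^ (i' - 1)) * iotaEmb n ((ulMinor m hm B) ^ (i - 1)))) = 0 := by
  rcases le_total m m' with hmm' | hm'm
  · exact trace_mul_iotaEmb_commutator_eq_zero hmm' hm' B _ _ ((Commute.refl _).pow_left _)
  · rw [← neg_sub, Matrix.mul_neg, trace_neg,
      trace_mul_iotaEmb_commutator_eq_zero hm'm hm B _ _ ((Commute.refl _).pow_left _), neg_zero]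

/-- Poisson-commutativity of the Gelfand–Zeitlin functions `p_{m,i}(B) = tr((B_(m))^i)`:
the Lie–Poisson bracket `tr(B · [ι_m((B_(m))^(i−1)), ι_{m'}((B_(m'))^(i'−1))])` vanishes. -/
theorem gz_hamiltonians_poisson_commute (n : ℕ) (hn : 1 ≤ n)
    (B : Matrix (Fin n) (Fin n) ℂ)
    (m i m' i' : ℕ) (hi1 : 1 ≤ i) (him : i ≤ m) (hm : m ≤ n)
    (hi1' : 1 ≤ i') (him' : i' ≤ m') (hm' : m' ≤ n) :
    Matrix.trace (B *
      (iotaEmb n ((ulMinor m hm B) ^ (i - 1)) * iotaEmb n ((ulMinor m' hm' B) ^ (i' - 1)) -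
       iotaEmb n ((ulMinor m' hm' B) ^ (i' - 1)) * iotaEmb n ((ulMinor m hm B) ^ (i - 1)))) = 0 :=
  gz_hamiltonians_poisson_commute_general n B m i m' i' hm hm'
end
end

section
/- Let 1 ≤ m < k, let X ∈ Mat_m(ℂ), a, b ∈ ℂ^m and c ∈ ℂ^{k−m}, and let B be the k×k complex matrix whose upper-left m×m block is X, whose (j,k)-entry is b_j for 1 ≤ j ≤ m, whose (m+1)-st row has entries a_1,…,a_m in columns 1,…,m and c_1 in column k, whose (j, j−1)-entry is 1 and (j,k)-entry is c_{j−m} for m+2 ≤ j ≤ k, and all of whose other entries are 0. Then, as polynomials in z: det(z·I_k − B) = det(z·I_m − X)·( z^{k−m} − Σ_{j=1}^{k−m} c_j·z^{j−1} ) − aᵀ·adj(z·I_m − X)·b, where adj denotes the adjugate matrix. (This is the determinant identity for generalized companion matrices used in the proof of the paper's Theorem 4.2, with signs made explicit.) -/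
/-!
Splitting the indices as `Fin m ⊕ Fin (k - m)` turns `B` into a block matrix with diagonal
blocks `X` and the companion matrix `C` of `z^(k-m) - Σ c_j z^j`, and rank-one off-diagonal
blocks `b e_lastᵀ` and `e_0 aᵀ`. Over the fraction field of `ℂ[z]` the Schur complement of
`zI - X` in `zI - B` is `zI - C` with only its `(0, last)` entry changed, by `-aᵀ (zI - X)⁻¹ b`.
The determinant is affine in that entry, with slope the cofactor `adj(zI - C)_(last, 0)`, and
this cofactor is `1` because its minor is triangular with diagonal `-1`.
-/

open Matrix Polynomial

noncomputable section

/-- The generalized companion matrix with parameter `m < k`, built from an `m × m` block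
`X`, vectors `a, b ∈ ℂ^m` and `c ∈ ℂ^{k−m}`: the upper-left block is `X`, the last column
carries `b` (rows `< m`) and `c` (rows `≥ m`), the row of index `m` carries `a` in the
first `m` columns, rows of index `> m` carry a subdiagonal `1`, and all other entries
vanish. -/
def genComp {k m : ℕ} (hm : m < k) (X : Matrix (Fin m) (Fin m) ℂ)
    (a b : Fin m → ℂ) (c : Fin (k - m) → ℂ) : Matrix (Fin k) (Fin k) ℂ :=
  fun i j =>
    if hi : (i : ℕ) < m then
      (if hj : (j : ℕ) < m then X ⟨i, hi⟩ ⟨j, hj⟩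
       else if (j : ℕ) = k - 1 then b ⟨i, hi⟩ else 0)
    else if (i : ℕ) = m then
      (if hj : (j : ℕ) < m then a ⟨j, hj⟩
       else if (j : ℕ) = k - 1 then c ⟨0, by omega⟩ else 0)
    else
      (if (j : ℕ) + 1 = (i : ℕ) then 1
       else if (j : ℕ) = k - 1 then c ⟨(i : ℕ) - m, by have := i.isLt; omega⟩ else 0)

namespace Matrix

section Blocks

variable {R : Type*} [CommRing R] {m n : Type*} [Fintype m] [DecidableEq m] [Fintype n]
  [DecidableEq n]

theorem det_sub_single (D : Matrix n n R) (i j : n) (s : R) :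
    (D - single i j s).det = D.det - s * D.adjugate j i := by
  have hD : D - single i j s = D.updateCol j ((fun r => D r j) + (-s) • Pi.single i 1) := by
    ext r q
    by_cases hq : q = j <;> by_cases hr : r = i <;>
      simp [hq, hr, sub_eq_add_neg, Ne.symm]
  rw [hD, det_updateCol_add, det_updateCol_smul, updateCol_eq_self, ← cramer_apply,
    cramer_eq_adjugate_mulVec, mulVec_single_one]
  simp [sub_eq_add_neg]

theorem det_fromBlocks_vecMulVec_single {A : Matrix m m R} (hA : IsUnit A.det) (D : Matrix n n R)
    (u v : m → R) (i j : n) :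
    (fromBlocks A (vecMulVec u (Pi.single j 1)) (vecMulVec (Pi.single i 1) v) D).det =
      A.det * D.det - (v ⬝ᵥ A.adjugate *ᵥ u) * D.adjugate j i := by
  have := A.invertibleOfIsUnitDet hA
  have hschur : vecMulVec (Pi.single i 1) v * ⅟A * vecMulVec u (Pi.single j 1) =
      single i j (v ⬝ᵥ A⁻¹ *ᵥ u) := by
    rw [vecMulVec_mul, vecMulVec_mul_vecMulVec, invOf_eq_nonsing_inv, ← dotProduct_mulVec]
    ext r q
    simp only [vecMulVec_apply, single_apply, Pi.single_apply, Pi.smul_apply, smul_eq_mul]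
    split_ifs <;> simp_all
  have hadj : A.det * (v ⬝ᵥ A⁻¹ *ᵥ u) = v ⬝ᵥ A.adjugate *ᵥ u := by
    rw [inv_def, smul_mulVec, dotProduct_smul, smul_eq_mul, ← mul_assoc,
      Ring.mul_inverse_cancel _ hA, one_mul]
  rw [det_fromBlocks₁₁, hschur, det_sub_single, mul_sub, ← mul_assoc, hadj]

theorem det_fromBlocks_vecMulVec_single_of_det_ne_zero [IsDomain R] {A : Matrix m m R}
    (hA : A.det ≠ 0) (D : Matrix n n R) (u v : m → R) (i j : n) :
    (fromBlocks A (vecMulVec u (Pi.single j 1)) (vecMulVec (Pi.single i 1) v) D).det =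
      A.det * D.det - (v ⬝ᵥ A.adjugate *ᵥ u) * D.adjugate j i := by
  let f := algebraMap R (FractionRing R)
  have hf : Function.Injective f := IsFractionRing.injective R (FractionRing R)
  have hfA : IsUnit (A.map f).det := by
    rw [← RingHom.mapMatrix_apply, ← RingHom.map_det]
    exact isUnit_iff_ne_zero.mpr ((map_ne_zero_iff f hf).mpr hA)
  have hblocks :
      (fromBlocks A (vecMulVec u (Pi.single j 1)) (vecMulVec (Pi.single i 1) v) D).map f =
        fromBlocks (A.map f) (vecMulVec (f ∘ u) (Pi.single j 1))
          (vecMulVec (Pi.single i 1) (f ∘ v)) (D.map f) := by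
    rw [fromBlocks_map]
    congr 1 <;> ext <;> simp [vecMulVec_apply, Pi.single_apply, apply_ite f]
  apply hf
  have := det_fromBlocks_vecMulVec_single hfA (D.map f) (f ∘ u) (f ∘ v) i j
  simp only [← RingHom.mapMatrix_apply, ← RingHom.map_det, ← RingHom.map_adjugate]
    at this hblocks
  rw [RingHom.map_det, hblocks, this]
  simp [RingHom.map_dotProduct, RingHom.map_mulVec, Function.comp_def]

theorem charpoly_fromBlocks_vecMulVec_single [IsDomain R] (A : Matrix m m R) (D : Matrix n n R)
    (u v : m → R) (i j : n) :
    (fromBlocks A (vecMulVec u (Pi.single j 1)) (vecMulVec (Pi.single i 1) v) D).charpoly =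
      A.charpoly * D.charpoly -
        ((C ∘ v) ⬝ᵥ (charmatrix A).adjugate *ᵥ (C ∘ u)) *
          (charmatrix D).adjugate j i := by
  have hblocks :
      charmatrix (fromBlocks A (vecMulVec u (Pi.single j 1)) (vecMulVec (Pi.single i 1) v) D) =
      fromBlocks (charmatrix A) (vecMulVec (-(C ∘ u)) (Pi.single j 1))
        (vecMulVec (Pi.single i 1) (-(C ∘ v))) (charmatrix D) := by
    rw [charmatrix_fromBlocks]
    congr 1 <;> refine Matrix.ext fun _ _ => ?_ <;>
      simp only [neg_apply, map_apply, vecMulVec_apply, Pi.single_apply] <;> split_ifs <;> simp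
  rw [charpoly, hblocks,
    det_fromBlocks_vecMulVec_single_of_det_ne_zero (charpoly_monic A).ne_zero]
  simp [charpoly, mulVec_neg, sub_eq_add_neg]

end Blocks

section Companion

variable {R : Type*} [CommRing R]

def companion {n : ℕ} (c : Fin n → R) : Matrix (Fin n) (Fin n) R :=
  of fun i j => if (j : ℕ) + 1 = i then 1 else if (j : ℕ) = n - 1 then c i else 0

theorem charmatrix_companion_apply {n : ℕ} (c : Fin n → R) (i j : Fin n) :
    charmatrix (companion c) i j =
      (if i = j then X else 0) -
        C (if (j : ℕ) + 1 = i then 1 else if (j : ℕ) = n - 1 then c i else 0) := by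
  by_cases h : i = j <;> simp [companion, h]

theorem charmatrix_companion_row_zero {n : ℕ} (c : Fin (n + 1) → R) :
    charmatrix (companion c) 0 =
      (Pi.single 0 (X : R[X]) - Pi.single (Fin.last n) (C (c 0)) : Fin (n + 1) → R[X]) := by
  ext j
  rw [charmatrix_companion_apply]
  simp only [Pi.sub_apply, Pi.single_apply, Fin.ext_iff, Fin.val_zero, Fin.val_last,
    Nat.add_one_ne_zero, if_false, add_tsub_cancel_right]
  split_ifs <;> simp_all

theorem charmatrix_companion_submatrix_succ {n : ℕ} (c : Fin (n + 1) → R) :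
    (charmatrix (companion c)).submatrix Fin.succ Fin.succ =
      charmatrix (companion (Fin.tail c)) := by
  refine Matrix.ext fun i j => ?_
  simp only [submatrix_apply, charmatrix_companion_apply, Fin.succ_inj, Fin.val_succ, Fin.tail,
    Nat.add_right_cancel_iff, add_tsub_cancel_right]
  have : (j : ℕ) + 1 = n ↔ (j : ℕ) = n - 1 := by omega
  simp only [this]

theorem det_charmatrix_companion_submatrix_succ_castSucc {n : ℕ} (c : Fin (n + 1) → R) :
    ((charmatrix (companion c)).submatrix Fin.succ Fin.castSucc).det = (-1) ^ n := by
  rw [det_of_isUpperTriangular]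
  · simp only [submatrix_apply, charmatrix_companion_apply]
    simp [Fin.ext_iff]
  · intro i j hij
    have : (j : ℕ) < i := hij
    simp only [submatrix_apply, charmatrix_companion_apply, Fin.ext_iff, Fin.val_succ,
      Fin.val_castSucc]
    rw [if_neg (by omega), if_neg (by omega), if_neg (by omega)]
    simp

theorem charpoly_companion {n : ℕ} (c : Fin n → R) :
    (companion c).charpoly = X ^ n - ∑ j, C (c j) * X ^ (j : ℕ) := by
  induction n with
  | zero => simp [charpoly]
  | succ n ih =>
    rw [charpoly, det_succ_row_zero, charmatrix_companion_row_zero]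
    simp only [Pi.sub_apply, mul_sub, sub_mul, Finset.sum_sub_distrib, Pi.single_apply, mul_ite,
      ite_mul, mul_zero, zero_mul, Finset.sum_ite_eq', Finset.mem_univ, if_true,
      Fin.succAbove_zero, Fin.succAbove_last, charmatrix_companion_submatrix_succ,
      det_charmatrix_companion_submatrix_succ_castSucc]
    rw [← charpoly, ih, Fin.sum_univ_succ, Fin.val_zero, Fin.val_last]
    have hsum : ∑ j : Fin n, C (c j.succ) * X ^ (j.succ : ℕ) =
        X * ∑ j : Fin n, C (Fin.tail c j) * X ^ (j : ℕ) := by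
      rw [Finset.mul_sum]
      exact Finset.sum_congr rfl fun j _ => by
        rw [Fin.val_succ, pow_succ, Fin.tail]
        ring
    have hsign : ((-1) ^ n * (-1) ^ n : R[X]) = 1 := by rw [← mul_pow]; simp
    linear_combination hsum - C (c 0) * hsign

theorem adjugate_charmatrix_companion_last_zero {n : ℕ} (hn : 0 < n) (c : Fin n → R) :
    (charmatrix (companion c)).adjugate ⟨n - 1, Nat.sub_lt hn one_pos⟩ ⟨0, hn⟩ = 1 := by
  obtain ⟨n, rfl⟩ := Nat.exists_eq_add_one_of_ne_zero hn.ne'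
  show (charmatrix (companion c)).adjugate (Fin.last n) 0 = 1
  rw [adjugate_fin_succ_eq_det_submatrix, Fin.succAbove_zero, Fin.succAbove_last,
    det_charmatrix_companion_submatrix_succ_castSucc, Fin.val_zero, Fin.val_last, zero_add,
    ← mul_pow]
  simp

end Companion

end Matrix

theorem genComp_eq_reindex {k m : ℕ} (hm : m < k) (X : Matrix (Fin m) (Fin m) ℂ)
    (a b : Fin m → ℂ) (c : Fin (k - m) → ℂ) :
    genComp hm X a b c =
      reindex (finSumFinEquiv.trans (finCongr (Nat.add_sub_cancel' hm.le)))
        (finSumFinEquiv.trans (finCongr (Nat.add_sub_cancel' hm.le)))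
        (fromBlocks X (vecMulVec b (Pi.single ⟨k - m - 1, by omega⟩ 1))
          (vecMulVec (Pi.single ⟨0, by omega⟩ 1) a) (companion c)) := by
  set e := finSumFinEquiv.trans (finCongr (Nat.add_sub_cancel' hm.le))
  refine Matrix.ext fun i j => ?_
  obtain ⟨p, rfl⟩ := e.surjective i
  obtain ⟨q, rfl⟩ := e.surjective j
  rcases p with i | i <;> rcases q with j | j <;>
    simp [e, genComp, companion, vecMulVec_apply, Pi.single_apply, Fin.ext_iff] <;>
    split_ifs <;> first | rfl | omega | (congr 1; ext; simp_all)

theorem genComp_charpoly_general (k m : ℕ) (hm : m < k)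
    (X : Matrix (Fin m) (Fin m) ℂ) (a b : Fin m → ℂ) (c : Fin (k - m) → ℂ) :
    (genComp hm X a b c).charpoly =
      X.charpoly *
        (Polynomial.X ^ (k - m) -
          ∑ j : Fin (k - m), Polynomial.C (c j) * Polynomial.X ^ (j : ℕ)) -
      ∑ i : Fin m, ∑ j : Fin m,
        Polynomial.C (a i) * (Matrix.charmatrix X).adjugate i j * Polynomial.C (b j) := by
  rw [genComp_eq_reindex, charpoly_reindex, charpoly_fromBlocks_vecMulVec_single,
    charpoly_companion, adjugate_charmatrix_companion_last_zero, mul_one]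
  simp only [dotProduct, mulVec, Function.comp_apply, Finset.mul_sum, mul_assoc]

/-- The determinant identity for generalized companion matrices:
`det(z·I_k − B) = det(z·I_m − X)·(z^{k−m} − Σ_{j=1}^{k−m} c_j z^{j−1}) − aᵀ·adj(z·I_m − X)·b`,
as polynomials in `z`. -/
theorem genComp_charpoly (k m : ℕ) (hm1 : 1 ≤ m) (hm : m < k)
    (X : Matrix (Fin m) (Fin m) ℂ) (a b : Fin m → ℂ) (c : Fin (k - m) → ℂ) :
    (genComp hm X a b c).charpoly =
      X.charpoly *
        (Polynomial.X ^ (k - m) -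
          ∑ j : Fin (k - m), Polynomial.C (c j) * Polynomial.X ^ (j : ℕ)) -
      ∑ i : Fin m, ∑ j : Fin m,
        Polynomial.C (a i) * (Matrix.charmatrix X).adjugate i j * Polynomial.C (b j) :=
  genComp_charpoly_general k m hm X a b c
end
end

section
/- Let B ∈ Matₙ(ℂ) and let p ∈ ℂ[z] be a polynomial such that the matrix p(B) is invertible. Then there exists a polynomial q ∈ ℂ[z] such that p(B) = exp(q(B)). In other words, every invertible element of the algebra ℂ[B] of polynomials in B is the exponential of an element of ℂ[B]. -/
/-!
Let `a = p(B)`. The closure of `ℂ[a]` is a commutative Banach algebra `S`; since the spectrum of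
`a` is finite, its complement is connected and spectral permanence makes `a` invertible in `S`.
The segment `z ↦ 1 + z • (a - 1)` runs from `1 = exp 0` to `a`, and it leaves the units of `S`
only at countably many `z`, namely at `z = (1 - w)⁻¹` for `w` in the spectrum. The remaining
parameters form a connected subset of `ℂ`. On the units of a commutative Banach algebra, being an
exponential is locally constant, because `exp` covers a neighbourhood of `1` (inverse function
theorem) and `exp m * y` is an exponential iff `y` is. Hence `a = exp l` with `l ∈ S`, and `S`
lies in the finite-dimensional, hence closed, algebra `ℂ[B]`.
-/

open NormedSpace Polynomial Filter Topology Set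

theorem NormedSpace.range_exp_mem_nhds_one (𝕂 : Type*) {𝔸 : Type*} [RCLike 𝕂] [NormedRing 𝔸]
    [NormedAlgebra 𝕂 𝔸] [CompleteSpace 𝔸] : range exp ∈ 𝓝 (1 : 𝔸) := by
  have h := (hasStrictFDerivAt_exp_zero (𝕂 := 𝕂) (𝔸 := 𝔸)).map_nhds_eq_of_surj
    (LinearMap.range_eq_top.mpr fun y => ⟨y, rfl⟩)
  rw [exp_zero] at h
  exact h ▸ range_mem_map

theorem NormedSpace.exp_mul_mem_range_exp_iff {𝔸 : Type*} [NormedCommRing 𝔸] [NormedAlgebra ℚ 𝔸]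
    [CompleteSpace 𝔸] (m a : 𝔸) : exp m * a ∈ range exp ↔ a ∈ range exp := by
  constructor
  · rintro ⟨l, hl⟩
    refine ⟨-m + l, ?_⟩
    rw [exp_add, hl, ← mul_assoc, ← exp_add, neg_add_cancel, exp_zero, one_mul]
  · rintro ⟨l, rfl⟩
    exact ⟨m + l, exp_add⟩

theorem NormedSpace.eventually_mem_range_exp_iff (𝕂 : Type*) {𝔸 : Type*} [RCLike 𝕂]
    [NormedCommRing 𝔸] [NormedAlgebra 𝕂 𝔸] [CompleteSpace 𝔸] {a : 𝔸} (ha : IsUnit a) :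
    ∀ᶠ y in 𝓝 a, y ∈ range exp ↔ a ∈ range exp := by
  let +nondep : NormedAlgebra ℚ 𝔸 := .restrictScalars ℚ 𝕂 𝔸
  obtain ⟨u, rfl⟩ := ha
  have hcont : Tendsto (fun y : 𝔸 => y * ((u⁻¹ : 𝔸ˣ) : 𝔸)) (𝓝 (u : 𝔸)) (𝓝 1) :=
    (continuous_mul_const _).tendsto' _ _ u.mul_inv
  filter_upwards [hcont (range_exp_mem_nhds_one 𝕂)] with y ⟨m, hm⟩
  have hy : y = exp m * u := by rw [hm, Units.inv_mul_cancel_right]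
  rw [hy, exp_mul_mem_range_exp_iff]

theorem spectrum.setOf_not_isUnit_one_add_smul_sub_one_subset {K A : Type*} [Field K] [Ring A]
    [Algebra K A] (b : A) :
    {z : K | ¬IsUnit (1 + z • (b - 1))} ⊆ (fun w => (1 - w)⁻¹) '' spectrum K b := by
  intro z hz
  have hz0 : z ≠ 0 := by rintro rfl; simp at hz
  refine ⟨1 - z⁻¹, ?_, by simp⟩
  rw [spectrum.mem_iff]
  intro hu
  apply hz
  have hfactor : 1 + z • (b - 1) =
      Units.mk0 (-z) (neg_ne_zero.mpr hz0) • (algebraMap K A (1 - z⁻¹) - b) := by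
    simp only [Units.smul_mk0, Algebra.algebraMap_eq_smul_one, smul_sub, sub_smul, smul_smul,
      one_smul, neg_smul, neg_mul, mul_inv_cancel₀ hz0, sub_neg_eq_add]
    abel
  rw [hfactor]
  exact hu.smul _

theorem NormedSpace.mem_range_exp_of_countable_spectrum {𝔸 : Type*} [NormedCommRing 𝔸]
    [NormedAlgebra ℂ 𝔸] [CompleteSpace 𝔸] {b : 𝔸} (hb : IsUnit b)
    (hσ : (spectrum ℂ b).Countable) : b ∈ range exp := by
  set U := {z : ℂ | IsUnit (1 + z • (b - 1))}
  have hU : IsPreconnected U := by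
    have hZ : Uᶜ.Countable :=
      (hσ.image _).mono (spectrum.setOf_not_isUnit_one_add_smul_sub_one_subset b)
    simpa using (hZ.isPathConnected_compl_of_one_lt_rank
      (by simp [Complex.rank_real_complex])).isConnected.isPreconnected
  have : PreconnectedSpace U := isPreconnected_iff_preconnectedSpace.mp hU
  have hloc : IsLocallyConstant fun z : U => 1 + (z : ℂ) • (b - 1) ∈ range exp := by
    refine (IsLocallyConstant.iff_eventually_eq _).mpr fun z => ?_
    have hf : Continuous fun z : U => 1 + (z : ℂ) • (b - 1) := by fun_prop
    exact (hf.continuousAt.eventually (eventually_mem_range_exp_iff ℂ z.2)).mono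
      fun _ h => propext h
  have h01 := hloc.apply_eq_of_preconnectedSpace ⟨0, by simp [U]⟩ ⟨1, by simpa [U] using hb⟩
  simp only [zero_smul, add_zero, one_smul, add_sub_cancel] at h01
  exact h01 ▸ ⟨0, exp_zero⟩

instance Algebra.elemental.instNormedCommRing {𝕜 A : Type*} [CommRing 𝕜] [NormedRing A]
    [Algebra 𝕜 A] (a : A) : NormedCommRing (Algebra.elemental 𝕜 a) :=
  { SubringClass.toNormedRing (Algebra.elemental 𝕜 a) with mul_comm := mul_comm }

theorem NormedSpace.exists_mem_elemental_exp_eq_of_countable_spectrum {A : Type*} [NormedRing A]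
    [NormedAlgebra ℂ A] [CompleteSpace A] {a : A} (ha : IsUnit a)
    (hσ : (spectrum ℂ a).Countable) : ∃ l ∈ Algebra.elemental ℂ a, exp l = a := by
  let +nondep : NormedAlgebra ℚ A := .restrictScalars ℚ ℂ A
  set S := Algebra.elemental ℂ a
  set a' : S := ⟨a, Algebra.elemental.self_mem ℂ a⟩
  have hσS : spectrum ℂ a' = spectrum ℂ a :=
    Subalgebra.spectrum_eq_of_isPreconnected_compl S a' (hσ.isPathConnected_compl_of_one_lt_rank
      (by simp [Complex.rank_real_complex])).isConnected.isPreconnected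
  have ha' : IsUnit a' :=
    (spectrum.zero_notMem_iff ℂ).mp (hσS ▸ (spectrum.zero_notMem_iff ℂ).mpr ha)
  obtain ⟨l, hl⟩ := mem_range_exp_of_countable_spectrum ha' (hσS ▸ hσ)
  let +nondep : NormedAlgebra ℚ S := .restrictScalars ℚ ℂ S
  exact ⟨l, l.2, (map_exp S.val continuous_subtype_val l).symm.trans congr(Subtype.val $hl)⟩

theorem Algebra.elemental_aeval_le_range_aeval {𝕜 A : Type*} [NontriviallyNormedField 𝕜]
    [CompleteSpace 𝕜] [NormedRing A] [NormedAlgebra 𝕜 A] [FiniteDimensional 𝕜 A] (x : A)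
    (p : 𝕜[X]) : Algebra.elemental 𝕜 (aeval x p) ≤ (aeval x).range := by
  rw [← Algebra.adjoin_singleton_eq_range_aeval]
  exact Algebra.elemental.le_of_mem
    (Submodule.closed_of_finiteDimensional (Subalgebra.toSubmodule (Algebra.adjoin 𝕜 {x})))
    (aeval_mem_adjoin_singleton 𝕜 x)

/-- Every invertible element of the algebra `ℂ[B]` of polynomials in a matrix `B` is the
exponential of an element of `ℂ[B]`. -/
theorem isUnit_aeval_eq_exp_aeval (n : ℕ) (B : Matrix (Fin n) (Fin n) ℂ)
    (p : Polynomial ℂ) (h : IsUnit (aeval B p)) :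
    ∃ q : Polynomial ℂ, aeval B p = NormedSpace.exp (aeval B q) := by
  -- Any norm will do: the operator norm induces the product topology on which `exp` is defined.
  let _ : NormedRing (Matrix (Fin n) (Fin n) ℂ) := Matrix.linftyOpNormedRing
  let _ : NormedAlgebra ℂ (Matrix (Fin n) (Fin n) ℂ) := Matrix.linftyOpNormedAlgebra
  obtain ⟨l, hl, hexp⟩ :=
    exists_mem_elemental_exp_eq_of_countable_spectrum h (Matrix.finite_spectrum _).countable
  obtain ⟨q, rfl⟩ := Algebra.elemental_aeval_le_range_aeval B p hl
  exact ⟨q, hexp.symm⟩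
end

section
/- Let B ∈ Matₙ(ℂ) and suppose b ∈ ℂⁿ is cyclic for B. Then a vector b′ ∈ ℂⁿ is cyclic for B if and only if there exists a polynomial q ∈ ℂ[z] with b′ = exp(q(B))·b. (Thus the set of cyclic vectors of a fixed B is a single orbit of the group {exp(q(B)) : q ∈ ℂ[z]}; this is the set-theoretic content of the statement that the symplectic quotients of V_n by the subgroup C_n of the Gelfand–Zeitlin group are exactly the regular adjoint orbits.) -/
/-!
Since `b` is cyclic, every vector is `p(B) b` for a polynomial `p`, and for `M` commuting with `B`
the Krylov matrix of `M b` is `M` times that of `b`. Hence `p(B) b` is cyclic iff `p(B)` is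
invertible, which settles one direction since `exp (q(B))` is invertible. Conversely, let `p(B)` be
invertible, so `p` does not vanish on the eigenvalues of `B`. Interpolating `log ∘ p` at the
eigenvalues gives `q₀` with `exp (-q₀(B)) p(B) - 1` vanishing at every eigenvalue, hence nilpotent;
and in the commutative algebra `ℂ[B]` a unipotent element is the exponential of a nilpotent one.
-/

open Matrix

noncomputable section

/-- The Krylov matrix of `(B, b)`, whose columns are `b, Bb, …, B^{n−1}b`. -/
def krylov {n : ℕ} (B : Matrix (Fin n) (Fin n) ℂ) (b : Fin n → ℂ) :
    Matrix (Fin n) (Fin n) ℂ :=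
  fun i j => (B ^ (j : ℕ) *ᵥ b) i

/-- `b` is a cyclic vector for `B` if `b, Bb, …, B^{n−1}b` form a basis of `ℂⁿ`. -/
def IsCyclic' {n : ℕ} (B : Matrix (Fin n) (Fin n) ℂ) (b : Fin n → ℂ) : Prop :=
  IsUnit (krylov B b)

/-- `V_n`, the set of pairs `(B, b)` with `b` cyclic for `B`. -/
def Vn (n : ℕ) : Set (Matrix (Fin n) (Fin n) ℂ × (Fin n → ℂ)) :=
  {p | IsCyclic' p.1 p.2}

open Polynomial

namespace IsNilpotent

variable {R : Type*} [CommRing R] [Algebra ℚ R]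

theorem sq_dvd_exp_sub_one_sub {x : R} (hx : IsNilpotent x) : x ^ 2 ∣ exp x - 1 - x := by
  obtain ⟨k, hk⟩ := hx
  have hk2 : x ^ (k + 2) = 0 := by rw [pow_add, hk, zero_mul]
  rw [exp_eq_sum hk2, Finset.sum_range_succ', Finset.sum_range_succ']
  simp only [pow_zero, pow_one, Nat.factorial_zero, Nat.factorial_one, Nat.cast_one, inv_one,
    one_smul, zero_add]
  have htail : ∑ i ∈ Finset.range k, ((i + 1 + 1).factorial : ℚ)⁻¹ • x ^ (i + 1 + 1) =
      x ^ 2 * ∑ i ∈ Finset.range k, ((i + 2).factorial : ℚ)⁻¹ • x ^ i := by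
    rw [Finset.mul_sum]
    refine Finset.sum_congr rfl fun i _ => ?_
    rw [mul_smul_comm, ← pow_add, add_comm 2 i]
  rw [add_sub_cancel_right, add_sub_cancel_right, htail]
  exact dvd_mul_right _ _

theorem exists_exp_eq_one_add {x : R} (hx : IsNilpotent x) :
    ∃ y, IsNilpotent y ∧ exp y = 1 + x := by
  obtain ⟨k, hk⟩ := hx
  induction k using Nat.strong_induction_on generalizing x with
  | _ k ih =>
  rcases le_or_gt k 1 with hk1 | hk1
  · refine ⟨0, IsNilpotent.zero, ?_⟩
    rw [exp_zero, ← pow_one x, pow_eq_zero_of_le hk1 hk, add_zero]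
  have hx : IsNilpotent x := ⟨k, hk⟩
  obtain ⟨t, ht⟩ := sq_dvd_exp_sub_one_sub hx.neg
  -- `(1 + x) * exp (-x)` is again unipotent, with nilpotency index about half that of `x`
  obtain ⟨y, hy, hexp⟩ : ∃ y, IsNilpotent y ∧ exp y = 1 + ((1 + x) * exp (-x) - 1) := by
    refine ih ((k + 1) / 2) (by omega) (x := (1 + x) * exp (-x) - 1) ?_
    have : (1 + x) * exp (-x) - 1 = x ^ 2 * ((1 + x) * t - 1) := by
      linear_combination (1 + x) * ht
    rw [this, mul_pow, ← pow_mul, pow_eq_zero_of_le (by omega) hk, zero_mul]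
  refine ⟨x + y, (Commute.all x y).isNilpotent_add hx hy, ?_⟩
  rw [exp_add_of_commute (Commute.all x y) hx hy, hexp]
  linear_combination (1 + x) * exp_mul_exp_neg_self hx

end IsNilpotent

theorem NormedSpace.exp_eq_isNilpotent_exp {𝔸 : Type*} [Ring 𝔸] [Algebra ℚ 𝔸] [TopologicalSpace 𝔸]
    [IsTopologicalRing 𝔸] {a : 𝔸} (ha : IsNilpotent a) :
    NormedSpace.exp a = IsNilpotent.exp a := by
  obtain ⟨k, hk⟩ := ha
  rw [NormedSpace.exp_eq_tsum_rat, IsNilpotent.exp_eq_sum hk]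
  refine tsum_eq_sum fun i hi => ?_
  rw [Finset.mem_range, not_lt] at hi
  rw [pow_eq_zero_of_le hi hk, smul_zero]

theorem Polynomial.dvd_pow_natDegree_of_forall_isRoot {K : Type*} [Field K] [IsAlgClosed K]
    {p q : K[X]} (hp : p.Monic) (h : ∀ a, p.IsRoot a → q.IsRoot a) : p ∣ q ^ p.natDegree := by
  nth_rw 1 [← prod_multiset_X_sub_C_of_monic_of_roots_card_eq hp
    IsAlgClosed.card_roots_eq_natDegree]
  rw [← IsAlgClosed.card_roots_eq_natDegree, ← Multiset.prod_replicate, ← Multiset.map_const']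
  exact Multiset.prod_dvd_prod_of_dvd _ _ fun a ha =>
    dvd_iff_isRoot.2 (h a (isRoot_of_mem_roots ha))

namespace Matrix

variable {m : Type*} [Fintype m] [DecidableEq m]

theorem aeval_mulVec_of_mulVec_eq_smul {R : Type*} [CommRing R] {B : Matrix m m R} {v : m → R}
    {μ : R} (h : B *ᵥ v = μ • v) (p : R[X]) : aeval B p *ᵥ v = p.eval μ • v := by
  rw [← toLinAlgEquiv'_apply, ← aeval_algHom_apply]
  exact Module.End.aeval_apply_of_mem_apply_eq_smul (by rwa [toLinAlgEquiv'_apply])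

theorem exists_mulVec_eq_smul_of_isRoot_charpoly {K : Type*} [Field K] {B : Matrix m m K} {μ : K}
    (h : B.charpoly.IsRoot μ) : ∃ v ≠ 0, B *ᵥ v = μ • v := by
  obtain ⟨v, hv0, hv⟩ := exists_mulVec_eq_zero_iff.2 ((eval_charpoly B μ).symm.trans h)
  refine ⟨v, hv0, ?_⟩
  rw [sub_mulVec, sub_eq_zero, scalar_apply] at hv
  ext i
  simp [← hv, mulVec_diagonal]

theorem isNilpotent_aeval_of_forall_isRoot {K : Type*} [Field K] [IsAlgClosed K]
    {B : Matrix m m K} {r : K[X]} (h : ∀ μ, B.charpoly.IsRoot μ → r.IsRoot μ) :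
    IsNilpotent (aeval B r) := by
  obtain ⟨c, hc⟩ := dvd_pow_natDegree_of_forall_isRoot B.charpoly_monic h
  exact ⟨_, by rw [← map_pow, hc, map_mul, aeval_self_charpoly, zero_mul]⟩

theorem eval_ne_zero_of_isUnit_aeval {K : Type*} [Field K] {B : Matrix m m K} {p : K[X]}
    (hp : IsUnit (aeval B p)) {μ : K} (hμ : B.charpoly.IsRoot μ) : p.eval μ ≠ 0 := by
  obtain ⟨v, hv0, hv⟩ := exists_mulVec_eq_smul_of_isRoot_charpoly hμ
  intro hpμ
  apply hv0
  apply mulVec_injective_iff_isUnit.2 hp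
  rw [aeval_mulVec_of_mulVec_eq_smul hv, hpμ, zero_smul, mulVec_zero]

theorem exp_mulVec_of_mulVec_eq_smul {M : Matrix m m ℂ} {v : m → ℂ} {μ : ℂ}
    (h : M *ᵥ v = μ • v) : NormedSpace.exp M *ᵥ v = Complex.exp μ • v := by
  -- any submultiplicative norm will do: `exp` only depends on the topology
  let : SeminormedRing (Matrix m m ℂ) := Matrix.linftyOpSemiNormedRing
  let : NormedRing (Matrix m m ℂ) := Matrix.linftyOpNormedRing
  let : NormedAlgebra ℂ (Matrix m m ℂ) := Matrix.linftyOpNormedAlgebra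
  have hM := (NormedSpace.exp_series_hasSum_exp' (𝕂 := ℂ) M).map (mulVec.addMonoidHomLeft v)
    (continuous_id.matrix_mulVec continuous_const)
  have hμ := (NormedSpace.exp_series_hasSum_exp' (𝕂 := ℂ) μ).smul_const v
  rw [Complex.exp_eq_exp_ℂ]
  refine hM.unique (hμ.congr_fun fun k => ?_)
  have hk := aeval_mulVec_of_mulVec_eq_smul h (X ^ k)
  rw [map_pow, aeval_X, eval_pow, eval_X] at hk
  simp [mulVec.addMonoidHomLeft, smul_mulVec, hk, smul_smul]

section AdjoinSingleton

variable (B : Matrix m m ℂ)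

theorem exists_aeval_eq_exp_aeval (q : ℂ[X]) :
    ∃ e : ℂ[X], aeval B e = NormedSpace.exp (aeval B q) := by
  have hclosed : IsClosed (Algebra.adjoin ℂ {B} : Set (Matrix m m ℂ)) :=
    (Subalgebra.toSubmodule (Algebra.adjoin ℂ {B})).closed_of_finiteDimensional
  exact Algebra.adjoin_mem_exists_aeval ℂ B
    (NormedSpace.exp_mem (R := ℂ) hclosed (aeval_mem_adjoin_singleton ℂ B))

theorem eval_eq_exp_eval_of_aeval_eq_exp_aeval {e q : ℂ[X]}
    (he : aeval B e = NormedSpace.exp (aeval B q)) {μ : ℂ} (hμ : B.charpoly.IsRoot μ) :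
    e.eval μ = Complex.exp (q.eval μ) := by
  obtain ⟨v, hv0, hv⟩ := exists_mulVec_eq_smul_of_isRoot_charpoly hμ
  refine smul_left_injective ℂ hv0 ?_
  dsimp only
  rw [← aeval_mulVec_of_mulVec_eq_smul hv, he,
    exp_mulVec_of_mulVec_eq_smul (aeval_mulVec_of_mulVec_eq_smul hv q)]

open scoped IsMulCommutative in
theorem exists_exp_aeval_eq_one_add {r : ℂ[X]} (hr : IsNilpotent (aeval B r)) :
    ∃ q : ℂ[X], NormedSpace.exp (aeval B q) = 1 + aeval B r := by
  obtain ⟨k, hk⟩ := hr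
  obtain ⟨y, hy, hexp⟩ := IsNilpotent.exists_exp_eq_one_add (R := Algebra.adjoin ℂ {B})
    (x := ⟨aeval B r, aeval_mem_adjoin_singleton ℂ B⟩) ⟨k, Subtype.ext (by simpa using hk)⟩
  obtain ⟨q, hq⟩ := Algebra.adjoin_eq_exists_aeval ℂ B y
  refine ⟨q, ?_⟩
  rw [hq, show (y : Matrix m m ℂ) = (Algebra.adjoin ℂ {B}).val y from rfl,
    NormedSpace.exp_eq_isNilpotent_exp (hy.map (Algebra.adjoin ℂ {B}).val),
    ← IsNilpotent.map_exp hy, hexp]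
  simp

theorem exists_forall_isRoot_charpoly_exp_eval_eq {p : ℂ[X]} (hp : IsUnit (aeval B p)) :
    ∃ q : ℂ[X], ∀ μ, B.charpoly.IsRoot μ → Complex.exp (q.eval μ) = p.eval μ := by
  classical
  refine ⟨Lagrange.interpolate B.charpoly.roots.toFinset id fun μ => Complex.log (p.eval μ),
    fun μ hμ => ?_⟩
  have hnode := Lagrange.eval_interpolate_at_node (fun μ => Complex.log (p.eval μ))
    (Set.injOn_id _) (Multiset.mem_toFinset.2 ((mem_roots B.charpoly_monic.ne_zero).2 hμ))
  rw [id_eq] at hnode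
  rw [hnode, Complex.exp_log (eval_ne_zero_of_isUnit_aeval hp hμ)]

theorem exists_exp_aeval_eq_of_isUnit {p : ℂ[X]} (hp : IsUnit (aeval B p)) :
    ∃ q : ℂ[X], NormedSpace.exp (aeval B q) = aeval B p := by
  obtain ⟨q₀, hq₀⟩ := exists_forall_isRoot_charpoly_exp_eval_eq B hp
  obtain ⟨e, he⟩ := exists_aeval_eq_exp_aeval B (-q₀)
  have hnil : IsNilpotent (aeval B (e * p - 1)) :=
    isNilpotent_aeval_of_forall_isRoot fun μ hμ => by
      rw [IsRoot, eval_sub, eval_mul, eval_one, eval_eq_exp_eval_of_aeval_eq_exp_aeval B he hμ,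
        eval_neg, ← hq₀ μ hμ, ← Complex.exp_add, neg_add_cancel, Complex.exp_zero, sub_self]
  obtain ⟨q₁, hq₁⟩ := exists_exp_aeval_eq_one_add B hnil
  refine ⟨q₀ + q₁, ?_⟩
  rw [map_add, exp_add_of_commute _ _ ((Commute.all q₀ q₁).map (aeval B)), hq₁,
    map_sub, map_one, add_sub_cancel, map_mul, he, map_neg, ← mul_assoc,
    ← exp_add_of_commute _ _ (Commute.refl (aeval B q₀)).neg_right, add_neg_cancel,
    NormedSpace.exp_zero, one_mul]

end AdjoinSingleton

end Matrix

section Krylov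

variable {n : ℕ} {B : Matrix (Fin n) (Fin n) ℂ} {b : Fin n → ℂ}

theorem krylov_mulVec_of_commute {M : Matrix (Fin n) (Fin n) ℂ} (hM : Commute M B) :
    krylov B (M *ᵥ b) = M * krylov B b := by
  ext i j
  change (B ^ (j : ℕ) *ᵥ (M *ᵥ b)) i = (M *ᵥ (B ^ (j : ℕ) *ᵥ b)) i
  rw [mulVec_mulVec, mulVec_mulVec, (hM.pow_right _).eq]

theorem krylov_mulVec (c : Fin n → ℂ) :
    krylov B b *ᵥ c = aeval B (∑ j : Fin n, C (c j) * X ^ (j : ℕ)) *ᵥ b := by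
  have hcol : krylov B b *ᵥ c = ∑ j, c j • (B ^ (j : ℕ) *ᵥ b) := by
    ext i
    simp [krylov, mulVec, dotProduct, mul_comm]
  simp [hcol, map_sum, sum_mulVec, ← Algebra.smul_def, smul_mulVec]

theorem IsCyclic'.exists_aeval_mulVec_eq (hb : IsCyclic' B b) (b' : Fin n → ℂ) :
    ∃ p : ℂ[X], aeval B p *ᵥ b = b' := by
  obtain ⟨K, hK⟩ := hb
  refine ⟨_, (krylov_mulVec (K⁻¹.val *ᵥ b')).symm.trans ?_⟩
  rw [mulVec_mulVec, ← hK, K.mul_inv, one_mulVec]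

theorem IsCyclic'.isCyclic'_mulVec_iff (hb : IsCyclic' B b) {M : Matrix (Fin n) (Fin n) ℂ}
    (hM : Commute M B) : IsCyclic' B (M *ᵥ b) ↔ IsUnit M := by
  rw [IsCyclic', krylov_mulVec_of_commute hM]
  exact IsUnit.mul_right_iff hb

end Krylov

theorem cyclic_vectors_single_exp_orbit_general (n : ℕ)
    (B : Matrix (Fin n) (Fin n) ℂ) (b : Fin n → ℂ) (hb : IsCyclic' B b)
    (b' : Fin n → ℂ) :
    IsCyclic' B b' ↔ ∃ q : Polynomial ℂ, b' = NormedSpace.exp (aeval B q) *ᵥ b := by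
  have hcomm (q : ℂ[X]) : Commute (aeval B q) B := by
    simpa using (Commute.all q X).map (aeval B)
  constructor
  · intro hb'
    obtain ⟨p, rfl⟩ := hb.exists_aeval_mulVec_eq b'
    have hp : IsUnit (aeval B p) := (hb.isCyclic'_mulVec_iff (hcomm p)).1 hb'
    obtain ⟨q, hq⟩ := exists_exp_aeval_eq_of_isUnit B hp
    exact ⟨q, by rw [hq]⟩
  · rintro ⟨q, rfl⟩
    exact (hb.isCyclic'_mulVec_iff (hcomm q).exp_left).2 (isUnit_exp _)

/-- If `b` is cyclic for `B`, then `b'` is cyclic for `B` iff `b' = exp(q(B))·b` for some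
polynomial `q`: the cyclic vectors of `B` form a single orbit of `{exp(q(B)) : q ∈ ℂ[z]}`. -/
theorem cyclic_vectors_single_exp_orbit (n : ℕ) (hn : 1 ≤ n)
    (B : Matrix (Fin n) (Fin n) ℂ) (b : Fin n → ℂ) (hb : IsCyclic' B b)
    (b' : Fin n → ℂ) :
    IsCyclic' B b' ↔ ∃ q : Polynomial ℂ, b' = NormedSpace.exp (aeval B q) *ᵥ b :=
  cyclic_vectors_single_exp_orbit_general n B b hb b'
end
end
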